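/- arXiv:2208.06873 — 2 statements merged into one kernel-verified Lean document; each statement's English description precedes it below -/
import Mathlib

section
/- Let s ∈ (0,1) and set d_s = 2^{1−2s}·Γ(1−s)/Γ(s). Then for every y > 0 the function ψ_s is twice differentiable at y and −ψ_s''(y) + ψ_s(y) = d_s·(2s−1) · y^{2(s−1)} · ψ_{1−s}(y). -/
/-!
Differentiating under the integral sign gives `K_a' = -(K_{a+1} + K_{a-1}) / 2`, and
integrating the derivative of `e^{-y cosh t} sinh (a t)` over `(0, ∞)` gives
`y (K_{a+1} - K_{a-1}) = 2 a K_a`.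
Together they yield `(y^b K_a)' = (b - a) y^{b-1} K_a - y^b K_{a-1}`. As `K_a` is even in `a`,
this gives `ψ_s' = -c_s y^s K_{1-s}` with `c_s = 2^{1-s} / Γ(s)`, and once more
`-ψ_s'' + ψ_s = c_s (2s - 1) y^{s-1} K_{1-s}`; finally `c_s = d_s 2^s / Γ(1-s)`.
-/

open MeasureTheory Real Filter Set

/-- The modified Bessel function of the second kind, for `y > 0` given by
`K_s(y) = ∫_0^∞ e^{−y·cosh t}·cosh(s·t) dt`. -/
noncomputable def besselK (s y : ℝ) : ℝ :=
  ∫ t in Set.Ioi (0 : ℝ), Real.exp (-(y * Real.cosh t)) * Real.cosh (s * t)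

/-- `ψ_s(y) = (2^{1−s}/Γ(s))·|y|^s·K_s(|y|)` for `y ≠ 0`, and `ψ_s(0) = 1`. -/
noncomputable def psi (s : ℝ) (y : ℝ) : ℝ :=
  if y = 0 then 1
  else (2 : ℝ) ^ (1 - s) / Real.Gamma s * |y| ^ s * besselK s |y|

open Topology Asymptotics

lemma eventually_exp_mul_sub_mul_cosh_le_exp_neg {y : ℝ} (hy : 0 < y) (c : ℝ) :
    ∀ᶠ t in atTop, exp (c * t - y * cosh t) ≤ exp (-t) := by
  have hlin : (fun t : ℝ => (c + 1) * t) =o[atTop] exp := by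
    simpa using (isLittleO_pow_exp_atTop (n := 1)).const_mul_left (c + 1)
  filter_upwards [hlin.bound (half_pos hy), eventually_ge_atTop 0] with t ht _
  have hcosh : exp t / 2 ≤ cosh t := by rw [cosh_eq]; linarith [exp_pos (-t)]
  rw [norm_eq_abs, norm_eq_abs, abs_of_pos (exp_pos t)] at ht
  rw [exp_le_exp]
  nlinarith [le_abs_self ((c + 1) * t)]

lemma integrableOn_exp_mul_sub_mul_cosh {y : ℝ} (hy : 0 < y) (c : ℝ) :
    IntegrableOn (fun t => exp (c * t - y * cosh t)) (Ioi 0) := by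
  refine integrable_of_isBigO_exp_neg one_pos (by fun_prop) (IsBigO.of_bound 1 ?_)
  filter_upwards [eventually_exp_mul_sub_mul_cosh_le_exp_neg hy c] with t ht
  simpa [abs_of_pos (exp_pos _)] using ht

lemma integrableOn_besselK_integrand {y : ℝ} (hy : 0 < y) (a : ℝ) :
    IntegrableOn (fun t => exp (-(y * cosh t)) * cosh (a * t)) (Ioi 0) := by
  have hsum : IntegrableOn (fun t => (exp (a * t - y * cosh t) + exp (-a * t - y * cosh t)) / 2)
      (Ioi 0) :=
    ((integrableOn_exp_mul_sub_mul_cosh hy a).add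
      (integrableOn_exp_mul_sub_mul_cosh hy (-a))).div_const 2
  refine hsum.congr_fun (fun t _ => ?_) measurableSet_Ioi
  simp only [cosh_eq (a * t), sub_eq_neg_add, exp_add, neg_mul]
  ring

lemma cosh_mul_cosh_mul (a t : ℝ) :
    cosh t * cosh (a * t) = (cosh ((a + 1) * t) + cosh ((a - 1) * t)) / 2 := by
  rw [add_mul, sub_mul, one_mul, cosh_add, cosh_sub]; ring

lemma sinh_mul_sinh_mul (a t : ℝ) :
    sinh t * sinh (a * t) = (cosh ((a + 1) * t) - cosh ((a - 1) * t)) / 2 := by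
  rw [add_mul, sub_mul, one_mul, cosh_add, cosh_sub]; ring

lemma besselK_neg (a y : ℝ) : besselK (-a) y = besselK a y := by
  simp only [besselK, neg_mul, cosh_neg]

lemma hasDerivAt_besselK (a : ℝ) {y : ℝ} (hy : 0 < y) :
    HasDerivAt (besselK a) (-(besselK (a + 1) y + besselK (a - 1) y) / 2) y := by
  set F' : ℝ → ℝ → ℝ := fun x t =>
    -(exp (-(x * cosh t)) * cosh ((a + 1) * t) + exp (-(x * cosh t)) * cosh ((a - 1) * t)) / 2
  have hint : ∀ {x}, 0 < x → ∀ b,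
      IntegrableOn (fun t => exp (-(x * cosh t)) * cosh (b * t)) (Ioi 0) :=
    fun hx b => integrableOn_besselK_integrand hx b
  have hF' : ∫ t in Ioi 0, F' y t = -(besselK (a + 1) y + besselK (a - 1) y) / 2 := by
    simp only [F', integral_div, integral_neg, integral_add (hint hy _) (hint hy _), besselK]
  have hball : ∀ x ∈ Metric.ball y (y / 2), y / 2 < x := fun x hx => by
    rw [Metric.mem_ball, dist_eq, abs_lt] at hx; linarith
  rw [← hF']
  refine (hasDerivAt_integral_of_dominated_loc_of_deriv_le (μ := volume.restrict (Ioi 0))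
    (F := fun x t => exp (-(x * cosh t)) * cosh (a * t)) (F' := F')
    (Metric.ball_mem_nhds y (half_pos hy)) (Eventually.of_forall fun x => by fun_prop)
    (hint hy a) (by fun_prop) (ae_of_all _ fun t x hx => ?_)
    (((hint (half_pos hy) (a + 1)).add (hint (half_pos hy) (a - 1))).div_const 2)
    (ae_of_all _ fun t x _ => ?_)).2
  · have hmono : exp (-(x * cosh t)) ≤ exp (-(y / 2 * cosh t)) :=
      exp_le_exp.2 (by nlinarith [hball x hx, cosh_pos t])
    have h1 := cosh_pos ((a + 1) * t)
    have h2 := cosh_pos ((a - 1) * t)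
    rw [norm_div, norm_neg, Real.norm_two, norm_of_nonneg (by positivity), Pi.add_apply]
    gcongr
  · refine ((((hasDerivAt_id x).mul_const (cosh t)).neg.exp).mul_const
      (cosh (a * t))).congr_deriv ?_
    simp only [F', Pi.neg_apply, id, one_mul]
    linear_combination (-exp (-(x * cosh t))) * cosh_mul_cosh_mul a t

lemma besselK_add_one_sub_besselK_sub_one (a : ℝ) {y : ℝ} (hy : 0 < y) :
    y * (besselK (a + 1) y - besselK (a - 1) y) = 2 * a * besselK a y := by
  set F : ℝ → ℝ := fun t => exp (-(y * cosh t)) * sinh (a * t)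
  set F' : ℝ → ℝ := fun t => a * (exp (-(y * cosh t)) * cosh (a * t)) -
    y / 2 * (exp (-(y * cosh t)) * cosh ((a + 1) * t) - exp (-(y * cosh t)) * cosh ((a - 1) * t))
  have hint := integrableOn_besselK_integrand hy
  have hderiv : ∀ t, HasDerivAt F (F' t) t := fun t => by
    refine ((((hasDerivAt_cosh t).const_mul y).neg.exp).mul
      (((hasDerivAt_id t).const_mul a).sinh)).congr_deriv ?_
    simp only [F', id, mul_one]
    linear_combination (-(y * exp (-(y * cosh t)))) * sinh_mul_sinh_mul a t
  have hF'int : IntegrableOn F' (Ioi 0) :=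
    ((hint a).const_mul a).sub' (((hint (a + 1)).sub' (hint (a - 1))).const_mul (y / 2))
  have hFint : IntegrableOn F (Ioi 0) := by
    refine (hint a).mono' (by fun_prop) (ae_of_all _ fun t => ?_)
    rw [norm_mul, norm_of_nonneg (exp_pos _).le, norm_eq_abs]
    gcongr
    rw [abs_sinh, ← cosh_abs (a * t)]
    exact (sinh_lt_cosh _).le
  have hF'val : ∫ t in Ioi 0, F' t =
      a * besselK a y - y / 2 * (besselK (a + 1) y - besselK (a - 1) y) := by
    rw [integral_sub ((hint a).const_mul a)
        (((hint (a + 1)).sub' (hint (a - 1))).const_mul (y / 2)),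
      integral_const_mul, integral_const_mul, integral_sub (hint (a + 1)) (hint (a - 1))]
    rfl
  have hFTC := integral_Ioi_of_hasDerivAt_of_tendsto' (fun t _ => hderiv t) hF'int
    (tendsto_zero_of_hasDerivAt_of_integrableOn_Ioi (fun t _ => hderiv t) hF'int hFint)
  simp only [hF'val, F, mul_zero, sinh_zero, sub_zero] at hFTC
  linarith

lemma hasDerivAt_rpow_mul_besselK (a b : ℝ) {y : ℝ} (hy : 0 < y) :
    HasDerivAt (fun x => x ^ b * besselK a x)
      ((b - a) * y ^ (b - 1) * besselK a y - y ^ b * besselK (a - 1) y) y := by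
  refine ((hasDerivAt_rpow_const (Or.inl hy.ne')).mul (hasDerivAt_besselK a hy)).congr_deriv ?_
  have hrec := besselK_add_one_sub_besselK_sub_one a hy
  rw [rpow_sub_one hy.ne']
  field_simp
  linear_combination -hrec

lemma psi_of_pos (s : ℝ) {y : ℝ} (hy : 0 < y) :
    psi s y = 2 ^ (1 - s) / Gamma s * (y ^ s * besselK s y) := by
  rw [psi, if_neg hy.ne', abs_of_pos hy, mul_assoc]

lemma hasDerivAt_psi (s : ℝ) {y : ℝ} (hy : 0 < y) :
    HasDerivAt (psi s) (-(2 ^ (1 - s) / Gamma s) * (y ^ s * besselK (1 - s) y)) y := by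
  have hpsi : (fun x => 2 ^ (1 - s) / Gamma s * (x ^ s * besselK s x)) =ᶠ[𝓝 y] psi s := by
    filter_upwards [Ioi_mem_nhds hy] with x hx using (psi_of_pos s hx).symm
  refine (((hasDerivAt_rpow_mul_besselK s s hy).const_mul _).congr_of_eventuallyEq
    hpsi.symm).congr_deriv ?_
  rw [sub_self, zero_mul, zero_mul, zero_sub, show s - 1 = -(1 - s) by ring, besselK_neg]
  ring

lemma hasDerivAt_deriv_psi (s : ℝ) {y : ℝ} (hy : 0 < y) :
    HasDerivAt (deriv (psi s))
      (-(2 ^ (1 - s) / Gamma s) *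
        ((2 * s - 1) * y ^ (s - 1) * besselK (1 - s) y - y ^ s * besselK s y)) y := by
  have hderiv : deriv (psi s) =ᶠ[𝓝 y]
      fun x => -(2 ^ (1 - s) / Gamma s) * (x ^ s * besselK (1 - s) x) := by
    filter_upwards [Ioi_mem_nhds hy] with x hx using (hasDerivAt_psi s hx).deriv
  refine (((hasDerivAt_rpow_mul_besselK (1 - s) s hy).const_mul _).congr_of_eventuallyEq
    hderiv).congr_deriv ?_
  rw [sub_sub_cancel_left, besselK_neg]
  ring

theorem psi_second_order_eq_of_lt_one_general (s : ℝ) (hs1 : s < 1)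
    (d : ℝ) (hd : d = (2 : ℝ) ^ (1 - 2 * s) * Real.Gamma (1 - s) / Real.Gamma s) :
    ∀ y : ℝ, 0 < y →
      DifferentiableAt ℝ (psi s) y ∧
      DifferentiableAt ℝ (deriv (psi s)) y ∧
      -(deriv (deriv (psi s)) y) + psi s y
        = d * (2 * s - 1) * y ^ (2 * (s - 1)) * psi (1 - s) y := by
  intro y hy
  refine ⟨(hasDerivAt_psi s hy).differentiableAt,
    (hasDerivAt_deriv_psi s hy).differentiableAt, ?_⟩
  have hconst : d * (2 ^ (1 - (1 - s)) / Gamma (1 - s)) = 2 ^ (1 - s) / Gamma s := by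
    have htwo : (2 : ℝ) ^ (1 - 2 * s) * 2 ^ (1 - (1 - s)) = 2 ^ (1 - s) := by
      rw [← rpow_add two_pos]; ring_nf
    have hΓ : Gamma (1 - s) ≠ 0 := (Gamma_pos_of_pos (by linarith)).ne'
    rw [hd, ← htwo]
    field_simp
  have hpow : y ^ (2 * (s - 1)) * y ^ (1 - s) = y ^ (s - 1) := by
    rw [← rpow_add hy]; ring_nf
  rw [(hasDerivAt_deriv_psi s hy).deriv, psi_of_pos s hy, psi_of_pos (1 - s) hy]
  linear_combination -(2 * s - 1) * besselK (1 - s) y *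
    (y ^ (2 * (s - 1)) * y ^ (1 - s) * hconst + 2 ^ (1 - s) / Gamma s * hpow)

/-- for `s ∈ (0,1)` and `d_s = 2^{1−2s}·Γ(1−s)/Γ(s)`, for every `y > 0`
`ψ_s` is twice differentiable at `y` and
`−ψ_s''(y) + ψ_s(y) = d_s·(2s−1)·y^{2(s−1)}·ψ_{1−s}(y)`. -/
theorem psi_second_order_eq_of_lt_one (s : ℝ) (hs0 : 0 < s) (hs1 : s < 1)
    (d : ℝ) (hd : d = (2 : ℝ) ^ (1 - 2 * s) * Real.Gamma (1 - s) / Real.Gamma s) :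
    ∀ y : ℝ, 0 < y →
      DifferentiableAt ℝ (psi s) y ∧
      DifferentiableAt ℝ (deriv (psi s)) y ∧
      -(deriv (deriv (psi s)) y) + psi s y
        = d * (2 * s - 1) * y ^ (2 * (s - 1)) * psi (1 - s) y :=
  psi_second_order_eq_of_lt_one_general s hs1 d hd
end

section
/- Let s ∈ (0, 1/2] and set d_s = 2^{1−2s}·Γ(1−s)/Γ(s). Then for all y₁, y₂ ∈ ℝ, |ψ_s(y₁) − ψ_s(y₂)| ≤ (d_s/(2s)) · |y₁ − y₂|^{2s}; that is, ψ_s is Hölder continuous on ℝ of exponent 2s with constant d_s/(2s). -/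
/-!
For `y > 0` the substitution `u = (y/2)·eᵗ` turns
`H(y) = ∫₀^∞ e^{-u} u^{s-1} e^{-y²/4u} du` into `2 (y/2)^s K_s(y)`, so `ψ_s(y) = H(|y|) / Γ(s)`.
Differentiating under the integral sign and dropping `e^{-u}` gives
`|H'(x)| ≤ (x/2) ∫₀^∞ u^{s-2} e^{-x²/4u} du = 2^{1-2s} Γ(1-s) x^{2s-1}`, the last integral being
a Gamma integral after `u ↦ 1/u`. Integrating this bound,
`|H(p) - H(q)| ≤ Γ(s) d_s/(2s) · (p^{2s} - q^{2s})` for `0 ≤ q ≤ p`, and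
`p^{2s} - q^{2s} ≤ (p - q)^{2s}` because `2s ≤ 1`.
-/

open MeasureTheory Real Filter Set

theorem integral_comp_exp_eq_integral_Ioi {E : Type*} [NormedAddCommGroup E] [NormedSpace ℝ E]
    (g : ℝ → E) : ∫ x, exp x • g (exp x) = ∫ y in Ioi 0, g y := by
  rw [← range_exp, ← image_univ, integral_image_eq_integral_abs_deriv_smul MeasurableSet.univ
    (fun x _ ↦ (hasDerivAt_exp x).hasDerivWithinAt) (exp_injective.injOn), Measure.restrict_univ]
  simp_rw [abs_of_pos (exp_pos _)]

theorem integrableOn_rpow_neg_sub_one_mul_exp_neg_div {a c : ℝ} (ha : 0 < a) (hc : 0 < c) :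
    IntegrableOn (fun u ↦ u ^ (-a - 1) * exp (-(c / u))) (Ioi 0) := by
  have h := (integrableOn_Ioi_comp_rpow_iff (fun v ↦ v ^ (a - 1) * exp (-c * v ^ (1:ℝ)))
    (neg_ne_zero.mpr one_ne_zero)).mpr
    (integrableOn_rpow_mul_exp_neg_mul_rpow (by linarith) one_pos hc)
  refine h.congr_fun (fun u (hu : 0 < u) ↦ ?_) measurableSet_Ioi
  simp only [abs_neg, abs_one, one_mul, rpow_one, smul_eq_mul, rpow_neg_one]
  rw [inv_rpow hu.le, ← rpow_neg hu.le, ← mul_assoc, ← rpow_add hu, div_eq_mul_inv]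
  ring_nf

theorem integral_rpow_neg_sub_one_mul_exp_neg_div {a c : ℝ} (ha : 0 < a) (hc : 0 < c) :
    ∫ u in Ioi 0, u ^ (-a - 1) * exp (-(c / u)) = Gamma a / c ^ a := by
  have h := integral_comp_rpow_Ioi (fun v ↦ v ^ (a - 1) * exp (-(c * v)))
    (neg_ne_zero.mpr (one_ne_zero (α := ℝ)))
  rw [integral_rpow_mul_exp_neg_mul_Ioi ha hc, one_div, inv_rpow hc.le] at h
  rw [div_eq_inv_mul, ← h]
  refine setIntegral_congr_fun measurableSet_Ioi (fun u (hu : 0 < u) ↦ ?_)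
  simp only [abs_neg, abs_one, one_mul, smul_eq_mul, rpow_neg_one]
  rw [inv_rpow hu.le, ← rpow_neg hu.le, ← mul_assoc, ← rpow_add hu, div_eq_mul_inv]
  ring_nf

theorem abs_sub_le_sub_of_abs_deriv_le {f f' g g' : ℝ → ℝ} {a b : ℝ} (hab : a ≤ b)
    (hf : ContinuousOn f (Icc a b)) (hg : ContinuousOn g (Icc a b))
    (hf' : ∀ x ∈ Ioo a b, HasDerivAt f (f' x) x) (hg' : ∀ x ∈ Ioo a b, HasDerivAt g (g' x) x)
    (hbound : ∀ x ∈ Ioo a b, |f' x| ≤ g' x) :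
    |f b - f a| ≤ g b - g a := by
  have hmono : ∀ σ : ℝ, |σ| = 1 → g a + σ * f a ≤ g b + σ * f b := fun σ hσ ↦ by
    refine monotoneOn_of_hasDerivWithinAt_nonneg (f := fun x ↦ g x + σ * f x)
      (f' := fun x ↦ g' x + σ * f' x) (convex_Icc a b) (hg.add (hf.const_smul σ))
      (fun x hx ↦ ?_) (fun x hx ↦ ?_) (left_mem_Icc.2 hab) (right_mem_Icc.2 hab) hab
    · rw [interior_Icc] at hx
      exact ((hg' x hx).add ((hf' x hx).const_mul σ)).hasDerivWithinAt
    · rw [interior_Icc] at hx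
      have hσf : |σ * f' x| = |f' x| := by rw [abs_mul, hσ, one_mul]
      linarith [hbound x hx, neg_abs_le (σ * f' x)]
  have h₁ := hmono 1 abs_one
  have h₂ := hmono (-1) (by norm_num)
  rw [abs_sub_le_iff]
  constructor <;> linarith

theorem rpow_sub_rpow_le_rpow_sub {a b p : ℝ} (hb : 0 ≤ b) (hba : b ≤ a) (hp : 0 ≤ p)
    (hp1 : p ≤ 1) : a ^ p - b ^ p ≤ (a - b) ^ p := by
  have := rpow_add_le_add_rpow (sub_nonneg.2 hba) hb hp hp1
  rw [sub_add_cancel] at this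
  linarith

theorem sq_div_four_le_cosh (t : ℝ) : t ^ 2 / 4 ≤ cosh t := by
  rw [← cosh_abs, cosh_eq]
  nlinarith [quadratic_le_exp_of_nonneg (abs_nonneg t), exp_pos (-|t|), sq_abs t, abs_nonneg t]

theorem integrable_exp_neg_mul_cosh_mul_exp {y : ℝ} (hy : 0 < y) (a : ℝ) :
    Integrable (fun t ↦ exp (-(y * cosh t)) * exp (a * t)) := by
  refine ((integrable_exp_neg_mul_sq (by positivity : 0 < y / 8)).const_mul
    (exp (2 * a ^ 2 / y))).mono' (by fun_prop) (ae_of_all _ fun t ↦ ?_)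
  rw [norm_of_nonneg (by positivity), ← exp_add, ← exp_add]
  refine exp_le_exp.2 ?_
  have hcosh := mul_le_mul_of_nonneg_left (sq_div_four_le_cosh t) hy.le
  have hsquare : a * t ≤ 2 * a ^ 2 / y + y * t ^ 2 / 8 := by
    rw [div_add_div _ _ hy.ne' (by norm_num), le_div_iff₀ (by positivity)]
    nlinarith [sq_nonneg (y * t - 4 * a)]
  nlinarith

noncomputable def heatIntegral (s y : ℝ) : ℝ :=
  ∫ u in Ioi 0, exp (-u) * u ^ (s - 1) * exp (-(y ^ 2 / (4 * u)))

theorem heatIntegral_zero {s : ℝ} (hs : 0 < s) : heatIntegral s 0 = Gamma s := by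
  simp [heatIntegral, Gamma_eq_integral hs]

theorem heatIntegral_abs (s y : ℝ) : heatIntegral s |y| = heatIntegral s y := by
  simp only [heatIntegral, sq_abs]

theorem aestronglyMeasurable_heatIntegrand (s y : ℝ) :
    AEStronglyMeasurable (fun u ↦ exp (-u) * u ^ (s - 1) * exp (-(y ^ 2 / (4 * u))))
      (volume.restrict (Ioi 0)) := by
  fun_prop

theorem norm_heatIntegrand_le (s y : ℝ) {u : ℝ} (hu : 0 < u) :
    ‖exp (-u) * u ^ (s - 1) * exp (-(y ^ 2 / (4 * u)))‖ ≤ exp (-u) * u ^ (s - 1) := by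
  rw [norm_of_nonneg (by positivity)]
  exact mul_le_of_le_one_right (by positivity) (exp_le_one_iff.2 (by simp; positivity))

theorem integrableOn_heatIntegrand {s : ℝ} (hs : 0 < s) (y : ℝ) :
    IntegrableOn (fun u ↦ exp (-u) * u ^ (s - 1) * exp (-(y ^ 2 / (4 * u)))) (Ioi 0) :=
  (GammaIntegral_convergent hs).mono' (aestronglyMeasurable_heatIntegrand s y)
    ((ae_restrict_iff' measurableSet_Ioi).2 (ae_of_all _ fun _ ↦ norm_heatIntegrand_le s y))

theorem continuous_heatIntegral {s : ℝ} (hs : 0 < s) : Continuous (heatIntegral s) :=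
  continuous_of_dominated (aestronglyMeasurable_heatIntegrand s)
    (fun y ↦ (ae_restrict_iff' measurableSet_Ioi).2 (ae_of_all _ fun _ ↦ norm_heatIntegrand_le s y))
    (GammaIntegral_convergent hs) (ae_of_all _ fun _ ↦ by fun_prop)

theorem hasDerivAt_heatIntegrand (s : ℝ) {u : ℝ} (hu : 0 < u) (z : ℝ) :
    HasDerivAt (fun z ↦ exp (-u) * u ^ (s - 1) * exp (-(z ^ 2 / (4 * u))))
      (-(z / 2) * (exp (-u) * u ^ (s - 2) * exp (-(z ^ 2 / (4 * u))))) z := by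
  have h := (((hasDerivAt_pow 2 z).div_const (4 * u)).neg.exp).const_mul (exp (-u) * u ^ (s - 1))
  simp only [Pi.neg_apply] at h
  refine h.congr_deriv ?_
  rw [show s - 1 = s - 2 + 1 by ring, rpow_add_one hu.ne']
  field_simp
  ring

theorem norm_deriv_heatIntegrand_le (s : ℝ) {x z u : ℝ} (hx : 0 < x) (hz : x / 2 < z)
    (hu : 0 < u) :
    ‖-(z / 2) * (exp (-u) * u ^ (s - 2) * exp (-(z ^ 2 / (4 * u))))‖
      ≤ 4 / x * (exp (-u) * u ^ (s - 1)) := by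
  have hz0 : 0 < z := by linarith
  have hte : z ^ 2 / (4 * u) * exp (-(z ^ 2 / (4 * u))) ≤ 1 :=
    (mul_exp_neg_le_exp_neg_one _).trans (exp_le_one_iff.2 (by norm_num))
  rw [norm_mul, norm_neg, norm_of_nonneg (by positivity), norm_of_nonneg (by positivity),
    show s - 1 = s - 2 + 1 by ring, rpow_add_one hu.ne']
  calc z / 2 * (exp (-u) * u ^ (s - 2) * exp (-(z ^ 2 / (4 * u))))
      = exp (-u) * u ^ (s - 2) * u * (2 / z) * (z ^ 2 / (4 * u) * exp (-(z ^ 2 / (4 * u)))) := by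
        field_simp
        ring
    _ ≤ exp (-u) * u ^ (s - 2) * u * (2 / z) := mul_le_of_le_one_right (by positivity) hte
    _ ≤ 4 / x * (exp (-u) * (u ^ (s - 2) * u)) := by
        rw [mul_comm (4 / x), mul_assoc (exp (-u))]
        refine mul_le_mul_of_nonneg_left ?_ (by positivity)
        rw [div_le_div_iff₀ hz0 hx]
        linarith

theorem hasDerivAt_heatIntegral {s : ℝ} (hs : 0 < s) {x : ℝ} (hx : 0 < x) :
    HasDerivAt (heatIntegral s)
      (-(x / 2) * ∫ u in Ioi 0, exp (-u) * u ^ (s - 2) * exp (-(x ^ 2 / (4 * u)))) x := by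
  have h := hasDerivAt_integral_of_dominated_loc_of_deriv_le (μ := volume.restrict (Ioi 0))
    (F := fun z u ↦ exp (-u) * u ^ (s - 1) * exp (-(z ^ 2 / (4 * u))))
    (bound := fun u ↦ 4 / x * (exp (-u) * u ^ (s - 1)))
    (Ioi_mem_nhds (half_lt_self hx)) (Eventually.of_forall (aestronglyMeasurable_heatIntegrand s))
    (integrableOn_heatIntegrand hs x) (by fun_prop)
    ((ae_restrict_iff' measurableSet_Ioi).2 (ae_of_all _ fun u hu z hz ↦
      norm_deriv_heatIntegrand_le s hx hz hu))
    ((GammaIntegral_convergent hs).const_mul _)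
    ((ae_restrict_iff' measurableSet_Ioi).2 (ae_of_all _ fun u hu z _ ↦
      hasDerivAt_heatIntegrand s hu z))
  rw [← integral_const_mul]
  exact h.2

theorem abs_deriv_heatIntegral_le {s : ℝ} (hs0 : 0 < s) (hs1 : s < 1) {x : ℝ} (hx : 0 < x) :
    |deriv (heatIntegral s) x| ≤ 2 ^ (1 - 2 * s) * Gamma (1 - s) * x ^ (2 * s - 1) := by
  have hmajorant : ∫ u in Ioi 0, exp (-u) * u ^ (s - 2) * exp (-(x ^ 2 / (4 * u)))
      ≤ ∫ u in Ioi 0, u ^ (-(1 - s) - 1) * exp (-(x ^ 2 / 4 / u)) := by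
    refine integral_mono_of_nonneg ?_
      (integrableOn_rpow_neg_sub_one_mul_exp_neg_div (by linarith) (by positivity)) ?_
    · filter_upwards [ae_restrict_mem measurableSet_Ioi] with u (hu : 0 < u)
      positivity
    · filter_upwards [ae_restrict_mem measurableSet_Ioi] with u (hu : 0 < u)
      rw [show -(1 - s) - 1 = s - 2 by ring, div_div, mul_assoc]
      exact mul_le_of_le_one_left (by positivity) (exp_le_one_iff.2 (by linarith))
  have hpow : (x ^ 2 / 4) ^ (1 - s) = (x / 2) ^ (2 - 2 * s) := by
    rw [show x ^ 2 / 4 = (x / 2) ^ (2 : ℝ) by norm_num; ring, ← rpow_mul (by positivity)]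
    ring_nf
  have htwo : (2 : ℝ) ^ (2 * (1 - s)) * 2 ^ (2 * s) = 4 := by
    rw [← rpow_add two_pos, show 2 * (1 - s) + 2 * s = 2 by ring]; norm_num
  rw [(hasDerivAt_heatIntegral hs0 hx).deriv, abs_mul, abs_neg, abs_of_pos (half_pos hx),
    abs_of_nonneg (setIntegral_nonneg measurableSet_Ioi fun u (hu : 0 < u) ↦ by positivity)]
  calc _ ≤ x / 2 * ∫ u in Ioi 0, u ^ (-(1 - s) - 1) * exp (-(x ^ 2 / 4 / u)) :=
        mul_le_mul_of_nonneg_left hmajorant (half_pos hx).le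
    _ = x / 2 * (Gamma (1 - s) / (x ^ 2 / 4) ^ (1 - s)) := by
        rw [integral_rpow_neg_sub_one_mul_exp_neg_div (by linarith) (by positivity)]
    _ = 2 ^ (1 - 2 * s) * Gamma (1 - s) * x ^ (2 * s - 1) := by
        rw [hpow, show 2 * s - 1 = 1 - (2 - 2 * s) by ring, rpow_sub hx, rpow_sub two_pos,
          div_rpow hx.le two_pos.le]
        field_simp
        simp only [rpow_one]
        linear_combination (x * Gamma (1 - s)) * htwo

theorem abs_heatIntegral_sub_le_of_le {s : ℝ} (hs0 : 0 < s) (hs1 : s < 1) {p q : ℝ} (hq : 0 ≤ q)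
    (hqp : q ≤ p) :
    |heatIntegral s p - heatIntegral s q|
      ≤ 2 ^ (1 - 2 * s) * Gamma (1 - s) / (2 * s) * (p ^ (2 * s) - q ^ (2 * s)) := by
  have hpos : ∀ x ∈ Ioo q p, 0 < x := fun x hx ↦ hq.trans_lt hx.1
  have h := abs_sub_le_sub_of_abs_deriv_le hqp (continuous_heatIntegral hs0).continuousOn
    (g := fun r ↦ 2 ^ (1 - 2 * s) * Gamma (1 - s) / (2 * s) * r ^ (2 * s))
    (g' := fun r ↦ 2 ^ (1 - 2 * s) * Gamma (1 - s) * r ^ (2 * s - 1))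
    (continuous_const.mul (continuous_rpow_const (by positivity))).continuousOn
    (fun x hx ↦ (hasDerivAt_heatIntegral hs0 (hpos x hx)).differentiableAt.hasDerivAt)
    (fun x hx ↦ ((hasDerivAt_rpow_const (Or.inl (hpos x hx).ne')).const_mul _).congr_deriv
      (by field_simp))
    (fun x hx ↦ abs_deriv_heatIntegral_le hs0 hs1 (hpos x hx))
  rwa [← mul_sub] at h

theorem abs_heatIntegral_sub_le {s : ℝ} (hs0 : 0 < s) (hs1 : s ≤ 1 / 2) (p q : ℝ) :
    |heatIntegral s p - heatIntegral s q|
      ≤ 2 ^ (1 - 2 * s) * Gamma (1 - s) / (2 * s) * |p - q| ^ (2 * s) := by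
  wlog h : |q| ≤ |p| generalizing p q
  · rw [abs_sub_comm, abs_sub_comm p]
    exact this q p (le_of_not_ge h)
  have hC : 0 ≤ 2 ^ (1 - 2 * s) * Gamma (1 - s) / (2 * s) := by
    have := Gamma_pos_of_pos (by linarith : 0 < 1 - s)
    positivity
  rw [← heatIntegral_abs s p, ← heatIntegral_abs s q]
  calc _ ≤ 2 ^ (1 - 2 * s) * Gamma (1 - s) / (2 * s) * (|p| ^ (2 * s) - |q| ^ (2 * s)) :=
        abs_heatIntegral_sub_le_of_le hs0 (by linarith) (abs_nonneg q) h
    _ ≤ 2 ^ (1 - 2 * s) * Gamma (1 - s) / (2 * s) * (|p| - |q|) ^ (2 * s) :=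
        mul_le_mul_of_nonneg_left
          (rpow_sub_rpow_le_rpow_sub (abs_nonneg q) h (by positivity) (by linarith)) hC
    _ ≤ 2 ^ (1 - 2 * s) * Gamma (1 - s) / (2 * s) * |p - q| ^ (2 * s) :=
        mul_le_mul_of_nonneg_left
          (rpow_le_rpow (sub_nonneg.2 h) (abs_sub_abs_le_abs_sub p q) (by positivity)) hC

theorem integral_exp_neg_mul_cosh_mul_exp {y : ℝ} (hy : 0 < y) (s : ℝ) :
    ∫ t, exp (-(y * cosh t)) * exp (s * t) = 2 * besselK s y := by
  have hreflect :
      ∫ t, exp (-(y * cosh t)) * exp (-s * t) = ∫ t, exp (-(y * cosh t)) * exp (s * t) := by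
    rw [← integral_neg_eq_self]
    simp only [cosh_neg, mul_neg, neg_mul, neg_neg]
  have hcosh : ∀ t, exp (-(y * cosh |t|)) * cosh (s * |t|)
      = (exp (-(y * cosh t)) * exp (s * t) + exp (-(y * cosh t)) * exp (-s * t)) / 2 := fun t ↦ by
    rcases abs_choice t with h | h <;> simp only [h, mul_neg, cosh_neg] <;>
      rw [cosh_eq (s * t), neg_mul] <;> ring
  rw [besselK, ← integral_comp_abs (f := fun t ↦ exp (-(y * cosh t)) * cosh (s * t))]
  simp only [hcosh]
  rw [integral_div, integral_add (integrable_exp_neg_mul_cosh_mul_exp hy s)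
    (integrable_exp_neg_mul_cosh_mul_exp hy (-s)), hreflect]
  ring

theorem heatIntegral_eq_mul_besselK (s : ℝ) {y : ℝ} (hy : 0 < y) :
    heatIntegral s y = 2 * (y / 2) ^ s * besselK s y := by
  rw [heatIntegral, ← integral_comp_exp_eq_integral_Ioi,
    ← integral_add_right_eq_self _ (log (y / 2)),
    show 2 * (y / 2) ^ s * besselK s y = (y / 2) ^ s * (2 * besselK s y) by ring,
    ← integral_exp_neg_mul_cosh_mul_exp hy s, ← integral_const_mul]
  refine integral_congr_ae (ae_of_all _ fun t ↦ ?_)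
  have hy2 : 0 < y / 2 := half_pos hy
  have hcosh : exp (-(exp t * (y / 2))) * exp (-(y ^ 2 / (4 * (exp t * (y / 2)))))
      = exp (-(y * cosh t)) := by
    rw [← exp_add, cosh_eq]
    congr 1
    rw [exp_neg]
    field_simp
    ring
  have hpow : exp t * (exp t) ^ (s - 1) = exp (s * t) := by
    rw [← exp_mul, ← exp_add]; ring_nf
  simp only [smul_eq_mul]
  rw [exp_add, exp_log hy2, mul_rpow (exp_pos t).le hy2.le, rpow_sub_one hy2.ne', ← hcosh,
    ← hpow]
  field_simp

theorem psi_eq_heatIntegral_div_Gamma {s : ℝ} (hs : 0 < s) (y : ℝ) :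
    psi s y = heatIntegral s y / Gamma s := by
  have hΓ := Gamma_pos_of_pos hs
  rcases eq_or_ne y 0 with rfl | hy
  · rw [psi, if_pos rfl, heatIntegral_zero hs, div_self hΓ.ne']
  · rw [psi, if_neg hy, ← heatIntegral_abs, heatIntegral_eq_mul_besselK s (abs_pos.2 hy),
      div_rpow (abs_nonneg y) two_pos.le, rpow_sub two_pos, rpow_one]
    field_simp

/-- for `s ∈ (0, 1/2]` and `d_s = 2^{1−2s}·Γ(1−s)/Γ(s)`, `ψ_s` is Hölder
continuous of exponent `2s` with constant `d_s/(2s)`. -/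
theorem psi_holder (s : ℝ) (hs0 : 0 < s) (hs1 : s ≤ 1 / 2)
    (d : ℝ) (hd : d = (2 : ℝ) ^ (1 - 2 * s) * Real.Gamma (1 - s) / Real.Gamma s) :
    ∀ y₁ y₂ : ℝ, |psi s y₁ - psi s y₂| ≤ d / (2 * s) * |y₁ - y₂| ^ (2 * s) := by
  intro y₁ y₂
  have hΓ := Gamma_pos_of_pos hs0
  rw [psi_eq_heatIntegral_div_Gamma hs0, psi_eq_heatIntegral_div_Gamma hs0, ← sub_div, abs_div,
    abs_of_pos hΓ, hd]
  calc _ ≤ 2 ^ (1 - 2 * s) * Gamma (1 - s) / (2 * s) * |y₁ - y₂| ^ (2 * s) / Gamma s :=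
        div_le_div_of_nonneg_right (abs_heatIntegral_sub_le hs0 hs1 y₁ y₂) hΓ.le
    _ = _ := by ring
end
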